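/- arXiv:2309.12236 — 3 statements merged into one kernel-verified Lean document; each statement's English description precedes it below -/
import Mathlib

section
/- Let D be a perfectly calibrated probability distribution over [0,1]×{0,1}, i.e. E_D[y | f] = f almost surely. Then for any non-negative kernel K on U×U with U ⊇ [0,1], smECE_K(D) = 0. -/
open MeasureTheory Real Set
open scoped ENNReal

noncomputable section

/-- Gaussian probability density of `N(0, σ²)`. -/
def gaussPdf (σ t : ℝ) : ℝ :=
  Real.exp (-(t ^ 2) / (2 * σ ^ 2)) / Real.sqrt (2 * Real.pi * σ ^ 2)

/-- The reflection map `π_R : ℝ → [0,1]`: `π_R(x) = x mod 2` if `x mod 2 ≤ 1`,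
and `2 - (x mod 2)` otherwise. -/
def piR (x : ℝ) : ℝ :=
  if 2 * Int.fract (x / 2) ≤ 1 then 2 * Int.fract (x / 2) else 2 - 2 * Int.fract (x / 2)

/-- The reflected Gaussian kernel on `[0,1]` with scale `σ`:
`K̃_σ(x,y) = ∑_{x̃ ∈ π_R⁻¹(x)} φ_σ(x̃ - y)`. -/
def reflGauss (σ x y : ℝ) : ℝ :=
  ∑' z : (piR ⁻¹' {x}), gaussPdf σ ((z : ℝ) - y)

/-- `D` is a distribution of prediction-outcome pairs over `[0,1] × {0,1}`. -/
def SupportedOn (D : Measure (ℝ × ℝ)) : Prop :=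
  ∀ᵐ p ∂D, p.1 ∈ Icc (0 : ℝ) 1 ∧ (p.2 = 0 ∨ p.2 = 1)

/-- The smooth ECE for a general kernel `K` on an interval `U ⊇ [0,1]`:
`smECE_K(D) = ∫_U |E_{(f,y)∼D}[K(t,f)(y−f)]| dt`. -/
def smECEK (U : Set ℝ) (K : ℝ → ℝ → ℝ) (D : Measure (ℝ × ℝ)) : ℝ :=
  ∫ t in U, |∫ p, K t p.1 * (p.2 - p.1) ∂D|

/-- `D` is perfectly calibrated: `E[y - f | f] = 0`, expressed via indicator test sets. -/
def PerfectlyCalibrated (D : Measure (ℝ × ℝ)) : Prop :=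
  IsProbabilityMeasure D ∧ SupportedOn D ∧
    ∀ s : Set ℝ, MeasurableSet s → ∫ p in Prod.fst ⁻¹' s, (p.2 - p.1) ∂D = 0

/-! Split `y - f` into its positive part, carried by `{y = 1}`, and its negative part, carried by
`{y = 0}`. Calibration says that `D` weighted by either part has the same image under `f`. A
measure carried by a horizontal line `{y = c}` is the image of its `f`-marginal under the
measurable embedding `x ↦ (x, c)`, so `∫ g(f) (y - f)⁺ dD` and `∫ g(f) (y - f)⁻ dD` are both the
integral of `g` against that common marginal. This holds for every `g`, measurable or not, so the
inner integral in `smECE_K` vanishes for each `t`. -/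

theorem MeasureTheory.Measure.map_withDensity_toNNReal_eq_neg_of_setIntegral_preimage_eq_zero
    {α γ : Type*} [MeasurableSpace α] [MeasurableSpace γ] {μ : Measure α} {φ : α → γ}
    (hφ : Measurable φ) {F : α → ℝ} (hF : Integrable F μ)
    (hcal : ∀ s, MeasurableSet s → ∫ x in φ ⁻¹' s, F x ∂μ = 0) :
    (μ.withDensity fun x => (F x).toNNReal).map φ =
      (μ.withDensity fun x => (-F x).toNNReal).map φ := by
  ext s hs
  rw [Measure.map_apply hφ hs, Measure.map_apply hφ hs, withDensity_apply _ (hφ hs),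
    withDensity_apply _ (hφ hs)]
  have h0 := hcal s hs
  rw [integral_eq_lintegral_pos_part_sub_lintegral_neg_part hF.restrict, sub_eq_zero] at h0
  exact (ENNReal.toReal_eq_toReal_iff' hF.restrict.lintegral_lt_top.ne
    hF.restrict.neg.lintegral_lt_top.ne).1 h0

theorem MeasureTheory.ae_withDensity_toNNReal_of_ae_pos_imp {α : Type*} [MeasurableSpace α]
    {μ : Measure α} {F : α → ℝ} (hF : Measurable F) {P : α → Prop}
    (h : ∀ᵐ x ∂μ, 0 < F x → P x) :
    ∀ᵐ x ∂(μ.withDensity fun x => (F x).toNNReal), P x := by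
  refine (ae_withDensity_iff hF.real_toNNReal.coe_nnreal_ennreal).2 ?_
  filter_upwards [h] with x hx hne
  exact hx (Real.toNNReal_pos.1 (pos_iff_ne_zero.2 (by exact_mod_cast hne)))

theorem MeasureTheory.integral_comp_fst_eq_integral_map_fst
    {α β E : Type*} [MeasurableSpace α] [MeasurableSpace β] [MeasurableSingletonClass β]
    [NormedAddCommGroup E] [NormedSpace ℝ E] {ν : Measure (α × β)} {c : β}
    (hc : ∀ᵐ p ∂ν, p.2 = c) (g : α → E) :
    ∫ p, g p.1 ∂ν = ∫ x, g x ∂(ν.map Prod.fst) := by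
  have hι : MeasurableEmbedding fun x : α => (x, c) := MeasurableEmbedding.id.prodMk_right c
  have hν : (ν.map Prod.fst).map (fun x => (x, c)) = ν := by
    rw [Measure.map_map hι.measurable measurable_fst]
    conv_rhs => rw [← Measure.map_id (μ := ν)]
    exact Measure.map_congr (hc.mono fun p hp => Prod.ext rfl hp.symm)
  conv_lhs => rw [← hν]
  exact hι.integral_map _

theorem mul_eq_toNNReal_smul_sub_toNNReal_neg_smul (a t : ℝ) :
    a * t = t.toNNReal • a - (-t).toNNReal • a := by
  rcases le_total 0 t with h | h
  · simp [NNReal.smul_def, Real.coe_toNNReal _ h, Real.toNNReal_eq_zero.2 (neg_nonpos.2 h), mul_comm]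
  · simp [NNReal.smul_def, Real.coe_toNNReal _ (neg_nonneg.2 h), Real.toNNReal_eq_zero.2 h, mul_comm]

theorem MeasureTheory.Integrable.toNNReal_smul_of_mul {α : Type*} [MeasurableSpace α]
    {μ : Measure α} {a t : α → ℝ} (ht : Measurable t) (h : Integrable (fun x => a x * t x) μ) :
    Integrable (fun x => (t x).toNNReal • a x) μ := by
  refine (h.indicator (measurableSet_lt (measurable_const (a := (0 : ℝ))) ht)).congr
    (ae_of_all _ fun x => ?_)
  by_cases hx : 0 < t x
  · simp [hx, Real.coe_toNNReal _ hx.le, NNReal.smul_def, mul_comm]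
  · simp [hx, Real.toNNReal_eq_zero.2 (not_lt.1 hx)]

theorem SupportedOn.integrable_sub {D : Measure (ℝ × ℝ)} [IsFiniteMeasure D]
    (hD : SupportedOn D) : Integrable (fun p : ℝ × ℝ => p.2 - p.1) D := by
  refine Integrable.of_bound (measurable_snd.sub measurable_fst).aestronglyMeasurable 1 ?_
  filter_upwards [hD] with p ⟨⟨h0, h1⟩, hy⟩
  rw [Real.norm_eq_abs, abs_le]
  rcases hy with hy | hy <;> constructor <;> linarith

theorem integral_mul_sub_eq_zero_of_perfectlyCalibrated {D : Measure (ℝ × ℝ)}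
    (hD : PerfectlyCalibrated D) (g : ℝ → ℝ) :
    ∫ p, g p.1 * (p.2 - p.1) ∂D = 0 := by
  obtain ⟨_, hsupp, hcal⟩ := hD
  by_cases hint : Integrable (fun p : ℝ × ℝ => g p.1 * (p.2 - p.1)) D
  swap
  · exact integral_undef hint
  have hres : Measurable fun p : ℝ × ℝ => p.2 - p.1 := measurable_snd.sub measurable_fst
  have hres_neg : Measurable fun p : ℝ × ℝ => -(p.2 - p.1) := hres.neg
  have hpos : ∀ᵐ p ∂(D.withDensity fun p => (p.2 - p.1).toNNReal), p.2 = 1 := by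
    refine ae_withDensity_toNNReal_of_ae_pos_imp hres ?_
    filter_upwards [hsupp] with p ⟨⟨h0, h1⟩, hy⟩ hp
    rcases hy with hy | hy <;> [linarith; exact hy]
  have hneg : ∀ᵐ p ∂(D.withDensity fun p => (-(p.2 - p.1)).toNNReal), p.2 = 0 := by
    refine ae_withDensity_toNNReal_of_ae_pos_imp hres_neg ?_
    filter_upwards [hsupp] with p ⟨⟨h0, h1⟩, hy⟩ hp
    rcases hy with hy | hy <;> [exact hy; linarith]
  simp_rw [mul_eq_toNNReal_smul_sub_toNNReal_neg_smul (g _)]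
  rw [integral_sub (hint.toNNReal_smul_of_mul hres)
      (Integrable.toNNReal_smul_of_mul hres_neg (by simpa only [mul_neg] using hint.fun_neg)),
    ← integral_withDensity_eq_integral_smul hres.real_toNNReal,
    ← integral_withDensity_eq_integral_smul hres_neg.real_toNNReal,
    integral_comp_fst_eq_integral_map_fst hpos, integral_comp_fst_eq_integral_map_fst hneg,
    Measure.map_withDensity_toNNReal_eq_neg_of_setIntegral_preimage_eq_zero measurable_fst
      hsupp.integrable_sub hcal, sub_self]

theorem smECEK_eq_zero_of_perfectlyCalibrated_general
    (U : Set ℝ)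
    (K : ℝ → ℝ → ℝ)
    (D : Measure (ℝ × ℝ)) (hD : PerfectlyCalibrated D) :
    smECEK U K D = 0 := by
  simp [smECEK, integral_mul_sub_eq_zero_of_perfectlyCalibrated hD]

/-- A perfectly calibrated distribution has `smECE_K(D) = 0` for any
non-negative kernel `K` on an interval `U ⊇ [0,1]`. -/
theorem smECEK_eq_zero_of_perfectlyCalibrated
    (U : Set ℝ) (hU : Icc (0 : ℝ) 1 ⊆ U) (hUconn : U.OrdConnected) (hUmeas : MeasurableSet U)
    (K : ℝ → ℝ → ℝ) (hKnn : ∀ t₁ t₂, 0 ≤ K t₁ t₂)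
    (D : Measure (ℝ × ℝ)) (hD : PerfectlyCalibrated D) :
    smECEK U K D = 0 :=
  smECEK_eq_zero_of_perfectlyCalibrated_general U K D hD
end
end

section
/- For any probability distribution D over [0,1]×{0,1}, dCE_{ℓ₁}(D) ≤ dCE(D), and there is a universal constant c > 0 such that c·dCE(D) ≤ dCE_{ℓ₁}(D). -/
open MeasureTheory Real Set
open scoped ENNReal

noncomputable section

/-- Wasserstein-1 distance for an (extended-real-valued) cost `c`:
the infimum over all couplings of the expected cost. -/
def W1 (c : ℝ × ℝ → ℝ × ℝ → ℝ≥0∞) (μ ν : Measure (ℝ × ℝ)) : ℝ≥0∞ :=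
  ⨅ γ ∈ {γ : Measure ((ℝ × ℝ) × (ℝ × ℝ)) | γ.map Prod.fst = μ ∧ γ.map Prod.snd = ν},
    ∫⁻ p, c p.1 p.2 ∂γ

/-- Distance to calibration: Wasserstein-1 distance (w.r.t. cost `c`) from `D`
to the set of perfectly calibrated distributions. -/
def dCECost (c : ℝ × ℝ → ℝ × ℝ → ℝ≥0∞) (D : Measure (ℝ × ℝ)) : ℝ≥0∞ :=
  ⨅ D' ∈ {D' : Measure (ℝ × ℝ) | PerfectlyCalibrated D'}, W1 c D D'

/-- The cost of `dCE`: `|f₁ - f₂|` if `y₁ = y₂`, else `∞`. -/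
def costInf (p q : ℝ × ℝ) : ℝ≥0∞ :=
  if p.2 = q.2 then ENNReal.ofReal |p.1 - q.1| else ⊤

/-- The lower distance to calibration `dCE`. -/
def dCE (D : Measure (ℝ × ℝ)) : ℝ≥0∞ := dCECost costInf D

/-- The `ℓ₁` cost `|f₁ - f₂| + |y₁ - y₂|` on `[0,1] × {0,1}`. -/
def costL1 (p q : ℝ × ℝ) : ℝ≥0∞ :=
  ENNReal.ofReal (|p.1 - q.1| + |p.2 - q.2|)

/-- The lower distance to calibration w.r.t. the `ℓ₁` metric. -/
def dCEl1 (D : Measure (ℝ × ℝ)) : ℝ≥0∞ := dCECost costL1 D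


/-!
Let `γ` couple `D` with a perfectly calibrated `D'`, and call a pair `((f, y), (f', y'))` matched
when `y = y'`. Matched pairs cost the same under both metrics; a mismatched pair costs at least `1`
in `ℓ₁`.

Repair `γ` by replacing the second point of a pair by `(y, y)`, a prediction equal to its outcome,
which never breaks calibration: always for mismatched pairs, and for matched pairs with outcome `b`
and second prediction `v` with probability `1 - θ_b(v)`, where `θ_b = min 1 (u_{1-b} / u_b)` and
`u_b(v)` is the density at `v` of `|f' - b|` over these pairs. The kept pairs then contribute
`min u₀ u₁` to both sides of the calibration equation at every level `v`, so the new second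
marginal is perfectly calibrated.

Moving `(f, y)` to `(y, y)` costs `|f - y| ≤ |f - f'| + |f' - y|`, so the repaired coupling costs
at most the `ℓ₁` cost of `γ` plus `∫ (1 - θ_b) u_b = ∫ (u_b - u_{1-b})⁺`. Calibration of `D'`
balances `u_b` plus the corresponding density of mismatched pairs with outcome `b` between `b = 0`
and `b = 1`, so this excess is at most the mismatched mass of `γ`, which is at most its `ℓ₁`
cost. Hence `dCE ≤ 2 dCE_{ℓ₁}`; the other inequality holds because the `ℓ₁` cost is pointwise
below the cost of `dCE`.
-/

theorem ENNReal.min_one_div_mul (a : ℝ≥0∞) {b : ℝ≥0∞} (hb : b ≠ ⊤) :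
    min 1 (a / b) * b = min a b := by
  rcases eq_or_ne b 0 with rfl | hb0
  · simp
  rcases le_total a b with hab | hab
  · rw [min_eq_right (ENNReal.div_le_of_le_mul (by simpa using hab)),
      ENNReal.div_mul_cancel hb0 hb, min_eq_left hab]
  · rw [min_eq_left ((ENNReal.le_div_iff_mul_le (.inl hb0) (.inl hb)).2 (by simpa using hab)),
      one_mul, min_eq_right hab]

theorem ENNReal.one_sub_min_one_div_mul (a : ℝ≥0∞) {b : ℝ≥0∞} (hb : b ≠ ⊤) :
    (1 - min 1 (a / b)) * b = b - a := by
  rw [ENNReal.sub_mul fun _ _ => hb, one_mul, ENNReal.min_one_div_mul a hb, min_comm, tsub_min]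

theorem MeasureTheory.Measure.map_withDensity_comp {α β : Type*} [MeasurableSpace α]
    [MeasurableSpace β] (μ : Measure α) {T : α → β} (hT : Measurable T) {f : β → ℝ≥0∞}
    (hf : Measurable f) : (μ.withDensity (f ∘ T)).map T = (μ.map T).withDensity f := by
  ext s hs
  rw [Measure.map_apply hT hs, withDensity_apply _ (hT hs), withDensity_apply _ hs,
    setLIntegral_map hs hf hT]
  rfl

namespace DistanceToCalibration

section Costs

theorem costL1_le_costInf (p q : ℝ × ℝ) : costL1 p q ≤ costInf p q := by
  unfold costL1 costInf
  split_ifs with h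
  · rw [h, sub_self, abs_zero, add_zero]
  · exact le_top

theorem one_le_abs_sub_of_ne {y y' : ℝ} (hy : y = 0 ∨ y = 1) (hy' : y' = 0 ∨ y' = 1)
    (hne : y ≠ y') : 1 ≤ |y - y'| := by
  rcases hy with rfl | rfl <;> rcases hy' with rfl | rfl <;> simp_all

theorem one_le_costL1 {p q : ℝ × ℝ} (hp : p.2 = 0 ∨ p.2 = 1) (hq : q.2 = 0 ∨ q.2 = 1)
    (hne : p.2 ≠ q.2) : 1 ≤ costL1 p q :=
  ENNReal.one_le_ofReal.2 <|
    (one_le_abs_sub_of_ne hp hq hne).trans (le_add_of_nonneg_left (abs_nonneg _))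

theorem measurable_costInf : Measurable fun x : (ℝ × ℝ) × (ℝ × ℝ) => costInf x.1 x.2 :=
  Measurable.ite (measurableSet_eq_fun (by fun_prop) (by fun_prop)) (by fun_prop) measurable_const

theorem measurable_costL1 : Measurable fun x : (ℝ × ℝ) × (ℝ × ℝ) => costL1 x.1 x.2 := by
  unfold costL1; fun_prop

theorem dCECost_mono {c c' : ℝ × ℝ → ℝ × ℝ → ℝ≥0∞} (h : ∀ p q, c p q ≤ c' p q)
    (D : Measure (ℝ × ℝ)) : dCECost c D ≤ dCECost c' D :=
  iInf₂_mono fun _ _ => iInf₂_mono fun _ _ => lintegral_mono fun _ => h _ _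

theorem le_dCECost {c : ℝ × ℝ → ℝ × ℝ → ℝ≥0∞} {D : Measure (ℝ × ℝ)} {C : ℝ≥0∞}
    (h : ∀ D', PerfectlyCalibrated D' → ∀ γ : Measure ((ℝ × ℝ) × (ℝ × ℝ)),
      γ.map Prod.fst = D → γ.map Prod.snd = D' → C ≤ ∫⁻ x, c x.1 x.2 ∂γ) :
    C ≤ dCECost c D :=
  le_iInf₂ fun D' hD' => le_iInf₂ fun γ hγ => h D' hD' γ hγ.1 hγ.2

end Costs

section Calibration

variable {D : Measure (ℝ × ℝ)}

theorem measurableSet_label (b : ℝ) : MeasurableSet {p : ℝ × ℝ | p.2 = b} :=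
  measurable_snd (measurableSet_singleton b)

theorem measurableSet_support :
    MeasurableSet {p : ℝ × ℝ | p.1 ∈ Icc (0 : ℝ) 1 ∧ (p.2 = 0 ∨ p.2 = 1)} :=
  (measurable_fst measurableSet_Icc).inter
    ((measurableSet_label 0).union (measurableSet_label 1))

theorem supportedOn_map_iff {α : Type*} [MeasurableSpace α] {μ : Measure α} {f : α → ℝ × ℝ}
    (hf : Measurable f) :
    SupportedOn (μ.map f) ↔ ∀ᵐ x ∂μ, (f x).1 ∈ Icc (0 : ℝ) 1 ∧ ((f x).2 = 0 ∨ (f x).2 = 1) :=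
  ae_map_iff hf.aemeasurable measurableSet_support

def labelMarginal (D : Measure (ℝ × ℝ)) (b : ℝ) : Measure ℝ :=
  (D.restrict {p | p.2 = b}).map Prod.fst

def labelMoment (D : Measure (ℝ × ℝ)) (b : ℝ) : Measure ℝ :=
  (labelMarginal D b).withDensity fun v => ENNReal.ofReal |v - b|

instance [IsFiniteMeasure D] (b : ℝ) : IsFiniteMeasure (labelMarginal D b) := by
  unfold labelMarginal; infer_instance

theorem ae_mem_Icc_labelMarginal (hD : SupportedOn D) (b : ℝ) :
    ∀ᵐ v ∂labelMarginal D b, v ∈ Icc (0 : ℝ) 1 :=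
  (ae_map_iff measurable_fst.aemeasurable measurableSet_Icc).2
    (ae_restrict_of_ae (hD.mono fun _ hp => hp.1))

theorem labelMoment_apply [IsFiniteMeasure D] (hD : SupportedOn D) {b : ℝ}
    (hb : b ∈ Icc (0 : ℝ) 1) {s : Set ℝ} (hs : MeasurableSet s) :
    labelMoment D b s = ENNReal.ofReal (∫ v in s, |v - b| ∂labelMarginal D b) := by
  have hbdd : ∀ᵐ v ∂labelMarginal D b, ‖|v - b|‖ ≤ 1 :=
    (ae_mem_Icc_labelMarginal hD b).mono fun v hv => by
      rw [norm_abs_eq_norm, Real.norm_eq_abs]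
      exact abs_sub_le_of_nonneg_of_le hv.1 hv.2 hb.1 hb.2
  rw [labelMoment, withDensity_apply _ hs, ofReal_integral_eq_lintegral_ofReal
    ((integrable_const (1 : ℝ)).mono' (by fun_prop) hbdd).restrict
    (ae_of_all _ fun _ => abs_nonneg _)]

theorem setIntegral_labelMarginal (b : ℝ) {s : Set ℝ} (hs : MeasurableSet s) {g : ℝ → ℝ}
    (hg : Measurable g) :
    ∫ v in s, g v ∂labelMarginal D b =
      ∫ p in {p | p.2 = b}, g p.1 ∂D.restrict (Prod.fst ⁻¹' s) := by
  rw [labelMarginal, setIntegral_map hs hg.aestronglyMeasurable measurable_fst.aemeasurable,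
    Measure.restrict_comm (measurable_fst hs)]

theorem setIntegral_snd_sub_fst_eq [IsFiniteMeasure D] (hD : SupportedOn D) {s : Set ℝ}
    (hs : MeasurableSet s) :
    ∫ p in Prod.fst ⁻¹' s, (p.2 - p.1) ∂D =
      ∫ v in s, |v - 1| ∂labelMarginal D 1 - ∫ v in s, |v - 0| ∂labelMarginal D 0 := by
  have hD' : ∀ᵐ p ∂D.restrict (Prod.fst ⁻¹' s), p.1 ∈ Icc (0 : ℝ) 1 ∧ (p.2 = 0 ∨ p.2 = 1) :=
    ae_restrict_of_ae hD
  have hint : Integrable (fun p : ℝ × ℝ => p.2 - p.1) (D.restrict (Prod.fst ⁻¹' s)) := by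
    refine (integrable_const (1 : ℝ)).mono' (by fun_prop) (hD'.mono fun p hp => ?_)
    rw [Real.norm_eq_abs]
    rcases hp.2 with h | h <;> rw [h] <;>
      exact abs_sub_le_of_nonneg_of_le (by norm_num) (by norm_num) hp.1.1 hp.1.2
  have hdisj : Disjoint {p : ℝ × ℝ | p.2 = 1} {p | p.2 = 0} :=
    disjoint_left.2 fun p h1 h0 => one_ne_zero (h1.symm.trans h0)
  rw [← setIntegral_eq_integral_of_ae_compl_eq_zero (s := {p | p.2 = 1} ∪ {p | p.2 = 0})
      (hD'.mono fun p hp hp' => absurd hp.2.symm (by simpa [or_comm] using hp')),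
    setIntegral_union hdisj (measurableSet_label 0) hint.integrableOn hint.integrableOn,
    setIntegral_labelMarginal 1 hs (by fun_prop), setIntegral_labelMarginal 0 hs (by fun_prop),
    sub_eq_add_neg, ← integral_neg]
  congr 1
  · refine setIntegral_congr_ae (measurableSet_label 1) (hD'.mono fun p hp hp1 => ?_)
    rw [hp1, abs_sub_comm, abs_of_nonneg (by linarith [hp.1.2])]
  · refine setIntegral_congr_ae (measurableSet_label 0) (hD'.mono fun p hp hp0 => ?_)
    rw [hp0, sub_zero, abs_of_nonneg hp.1.1, zero_sub]

theorem calibrated_iff_labelMoment_eq [IsFiniteMeasure D] (hD : SupportedOn D) :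
    (∀ s : Set ℝ, MeasurableSet s → ∫ p in Prod.fst ⁻¹' s, (p.2 - p.1) ∂D = 0) ↔
      labelMoment D 1 = labelMoment D 0 := by
  have h0 : (0 : ℝ) ∈ Icc (0 : ℝ) 1 := ⟨le_rfl, zero_le_one⟩
  have h1 : (1 : ℝ) ∈ Icc (0 : ℝ) 1 := ⟨zero_le_one, le_rfl⟩
  constructor
  · intro h
    ext s hs
    rw [labelMoment_apply hD h1 hs, labelMoment_apply hD h0 hs,
      ← sub_eq_zero.1 ((setIntegral_snd_sub_fst_eq hD hs).symm.trans (h s hs))]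
  · intro h s hs
    have hs' := congrArg (fun μ : Measure ℝ => μ s) h
    simp only [labelMoment_apply hD h1 hs, labelMoment_apply hD h0 hs] at hs'
    rw [setIntegral_snd_sub_fst_eq hD hs, sub_eq_zero]
    exact (ENNReal.ofReal_eq_ofReal_iff (setIntegral_nonneg hs fun _ _ => abs_nonneg _)
      (setIntegral_nonneg hs fun _ _ => abs_nonneg _)).1 hs'

theorem labelMoment_add (μ ν : Measure (ℝ × ℝ)) (b : ℝ) :
    labelMoment (μ + ν) b = labelMoment μ b + labelMoment ν b := by
  rw [labelMoment, labelMarginal, Measure.restrict_add, Measure.map_add _ _ measurable_fst,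
    withDensity_add_measure]
  rfl

theorem labelMoment_eq_zero_of_ae_fst_eq_snd {μ : Measure (ℝ × ℝ)} (h : ∀ᵐ p ∂μ, p.1 = p.2)
    (b : ℝ) : labelMoment μ b = 0 := by
  rw [← Measure.measure_univ_eq_zero, labelMoment, labelMarginal, withDensity_apply _ .univ,
    Measure.restrict_univ, lintegral_map (by fun_prop) measurable_fst]
  refine lintegral_eq_zero_of_ae_eq_zero ?_
  filter_upwards [ae_restrict_of_ae h, ae_restrict_mem (measurableSet_label b)] with p hp hb
  simp [hp, show p.2 = b from hb]

end Calibration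

section Repair

variable {γ : Measure ((ℝ × ℝ) × (ℝ × ℝ))} {w : (ℝ × ℝ) × (ℝ × ℝ) → ℝ≥0∞}

def matched : Set ((ℝ × ℝ) × (ℝ × ℝ)) := {x | x.1.2 = x.2.2}

theorem measurableSet_matched : MeasurableSet matched :=
  measurableSet_eq_fun (by fun_prop) (by fun_prop)

def toDiagonal (x : (ℝ × ℝ) × (ℝ × ℝ)) : (ℝ × ℝ) × (ℝ × ℝ) := (x.1, (x.1.2, x.1.2))

theorem measurable_toDiagonal : Measurable toDiagonal := by unfold toDiagonal; fun_prop

def repair (γ : Measure ((ℝ × ℝ) × (ℝ × ℝ))) (w : (ℝ × ℝ) × (ℝ × ℝ) → ℝ≥0∞) :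
    Measure ((ℝ × ℝ) × (ℝ × ℝ)) :=
  γ.withDensity w + (γ.withDensity (1 - w)).map toDiagonal

theorem map_fst_repair (hw : Measurable w) (hw1 : w ≤ 1) :
    (repair γ w).map Prod.fst = γ.map Prod.fst := by
  rw [repair, Measure.map_add _ _ measurable_fst,
    Measure.map_map measurable_fst measurable_toDiagonal]
  change _ + (γ.withDensity (1 - w)).map Prod.fst = _
  rw [← Measure.map_add _ _ measurable_fst, ← withDensity_add_left hw,
    add_tsub_cancel_of_le hw1, withDensity_one]

theorem map_snd_repair :
    (repair γ w).map Prod.snd = (γ.withDensity w).map Prod.snd +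
      (γ.withDensity (1 - w)).map fun x => (x.1.2, x.1.2) := by
  rw [repair, Measure.map_add _ _ measurable_snd,
    Measure.map_map measurable_snd measurable_toDiagonal]
  rfl

theorem lintegral_repair {c : (ℝ × ℝ) × (ℝ × ℝ) → ℝ≥0∞} (hc : Measurable c)
    (hw : Measurable w) :
    ∫⁻ x, c x ∂repair γ w = ∫⁻ x, (w x * c x + (1 - w x) * c (toDiagonal x)) ∂γ := by
  rw [repair, lintegral_add_measure, lintegral_map hc measurable_toDiagonal,
    lintegral_withDensity_eq_lintegral_mul _ hw hc,
    lintegral_withDensity_eq_lintegral_mul _ (measurable_one.sub hw)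
      (show Measurable fun x => c (toDiagonal x) from hc.comp measurable_toDiagonal),
    ← lintegral_add_left (hw.mul hc)]
  rfl

theorem costInf_repair_le {x : (ℝ × ℝ) × (ℝ × ℝ)} (hw1 : w x ≤ 1)
    (hw0 : x ∉ matched → w x = 0) (hf : x.1.1 ∈ Icc (0 : ℝ) 1) (hy : x.1.2 = 0 ∨ x.1.2 = 1)
    (hy' : x.2.2 = 0 ∨ x.2.2 = 1) :
    w x * costInf x.1 x.2 + (1 - w x) * costInf (toDiagonal x).1 (toDiagonal x).2 ≤
      costL1 x.1 x.2 +
        matched.indicator (fun x => (1 - w x) * ENNReal.ofReal |x.2.1 - x.2.2|) x := by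
  have hdiag : costInf (toDiagonal x).1 (toDiagonal x).2 = ENNReal.ofReal |x.1.1 - x.1.2| :=
    if_pos rfl
  by_cases hm : x ∈ matched
  · have htri : ENNReal.ofReal |x.1.1 - x.1.2| ≤
        ENNReal.ofReal |x.1.1 - x.2.1| + ENNReal.ofReal |x.2.1 - x.2.2| := by
      rw [← ENNReal.ofReal_add (abs_nonneg _) (abs_nonneg _), show x.1.2 = x.2.2 from hm]
      exact ENNReal.ofReal_le_ofReal (abs_sub_le _ _ _)
    rw [hdiag, indicator_of_mem hm, show costInf x.1 x.2 = _ from if_pos hm]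
    calc w x * ENNReal.ofReal |x.1.1 - x.2.1| + (1 - w x) * ENNReal.ofReal |x.1.1 - x.1.2|
        ≤ w x * ENNReal.ofReal |x.1.1 - x.2.1| + (1 - w x) *
            (ENNReal.ofReal |x.1.1 - x.2.1| + ENNReal.ofReal |x.2.1 - x.2.2|) := by gcongr
      _ = ENNReal.ofReal |x.1.1 - x.2.1| + (1 - w x) * ENNReal.ofReal |x.2.1 - x.2.2| := by
        rw [mul_add, ← add_assoc, ← add_mul, add_tsub_cancel_of_le hw1, one_mul]
      _ ≤ _ := by
        gcongr
        exact ENNReal.ofReal_le_ofReal (le_add_of_nonneg_right (abs_nonneg _))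
  · have hlab : 1 ≤ |x.1.2 - x.2.2| := one_le_abs_sub_of_ne hy hy' hm
    have hf' : |x.1.1 - x.1.2| ≤ 1 := by
      rcases hy with h | h <;> rw [h] <;>
        exact abs_sub_le_of_nonneg_of_le hf.1 hf.2 (by norm_num) (by norm_num)
    rw [hdiag, hw0 hm, zero_mul, zero_add, tsub_zero, one_mul]
    refine (ENNReal.ofReal_le_ofReal ?_).trans le_self_add
    linarith [abs_nonneg (x.1.1 - x.2.1)]

theorem lintegral_costInf_repair_le (hw : Measurable w) (hw1 : w ≤ 1)
    (hw0 : ∀ x ∉ matched, w x = 0)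
    (h₁ : ∀ᵐ x ∂γ, x.1.1 ∈ Icc (0 : ℝ) 1 ∧ (x.1.2 = 0 ∨ x.1.2 = 1))
    (h₂ : ∀ᵐ x ∂γ, x.2.1 ∈ Icc (0 : ℝ) 1 ∧ (x.2.2 = 0 ∨ x.2.2 = 1)) :
    ∫⁻ x, costInf x.1 x.2 ∂repair γ w ≤ ∫⁻ x, costL1 x.1 x.2 ∂γ +
      ∫⁻ x in matched, (1 - w x) * ENNReal.ofReal |x.2.1 - x.2.2| ∂γ := by
  rw [lintegral_repair measurable_costInf hw, ← lintegral_indicator measurableSet_matched,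
    ← lintegral_add_left measurable_costL1]
  refine lintegral_mono_ae ?_
  filter_upwards [h₁, h₂] with x hx₁ hx₂
  exact costInf_repair_le (hw1 x) (hw0 x) hx₁.1 hx₁.2 hx₂.2

theorem measure_compl_matched_le_lintegral_costL1
    (h₁ : ∀ᵐ x ∂γ, x.1.2 = 0 ∨ x.1.2 = 1) (h₂ : ∀ᵐ x ∂γ, x.2.2 = 0 ∨ x.2.2 = 1) :
    γ matchedᶜ ≤ ∫⁻ x, costL1 x.1 x.2 ∂γ := by
  rw [← lintegral_indicator_one measurableSet_matched.compl]
  refine lintegral_mono_ae ?_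
  filter_upwards [h₁, h₂] with x hx₁ hx₂
  by_cases hm : x ∈ matched
  · simp [hm]
  · rw [indicator_of_mem (show x ∈ matchedᶜ from hm), Pi.one_apply]
    exact one_le_costL1 hx₁ hx₂ hm

end Repair

section Densities

variable (γ : Measure ((ℝ × ℝ) × (ℝ × ℝ)))

def targetLabel (b : ℝ) : Set ((ℝ × ℝ) × (ℝ × ℝ)) := {x | x.2.2 = b}

def predMass (s : Set ((ℝ × ℝ) × (ℝ × ℝ))) : Measure ℝ :=
  (γ.restrict s).map fun x => x.2.1

def predDensity (s : Set ((ℝ × ℝ) × (ℝ × ℝ))) : ℝ → ℝ≥0∞ :=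
  (predMass γ s).rnDeriv (γ.map fun x => x.2.1)

/-- `u_b` -/
def matchedMoment (b v : ℝ) : ℝ≥0∞ :=
  ENNReal.ofReal |v - b| * predDensity γ (matched ∩ targetLabel b) v

/-- `θ_b` -/
def keptFraction (b v : ℝ) : ℝ≥0∞ :=
  min 1 (matchedMoment γ (1 - b) v / matchedMoment γ b v)

def keep : (ℝ × ℝ) × (ℝ × ℝ) → ℝ≥0∞ :=
  matched.indicator fun x =>
    if x.2.2 = 1 then keptFraction γ 1 x.2.1 else keptFraction γ 0 x.2.1

variable {γ}

theorem measurableSet_targetLabel (b : ℝ) : MeasurableSet (targetLabel b) :=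
  measurable_snd.snd (measurableSet_singleton b)

theorem measurable_predDensity (s : Set ((ℝ × ℝ) × (ℝ × ℝ))) :
    Measurable (predDensity γ s) :=
  Measure.measurable_rnDeriv _ _

theorem measurable_keptFraction (b : ℝ) : Measurable (keptFraction γ b) := by
  unfold keptFraction matchedMoment
  have := measurable_predDensity (γ := γ)
  fun_prop

theorem measurable_keep : Measurable (keep γ) :=
  (Measurable.ite (measurableSet_targetLabel 1) ((measurable_keptFraction 1).comp (by fun_prop))
    ((measurable_keptFraction 0).comp (by fun_prop))).indicator measurableSet_matched

theorem keep_le_one : keep γ ≤ 1 :=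
  indicator_le fun _ _ => by split_ifs <;> exact min_le_left _ _

theorem keep_eq_indicator {b : ℝ} (hb : b = 0 ∨ b = 1) {x : (ℝ × ℝ) × (ℝ × ℝ)}
    (hx : x.2.2 = b) : keep γ x = matched.indicator (fun x => keptFraction γ b x.2.1) x := by
  unfold keep indicator
  rcases hb with rfl | rfl <;> simp [hx]

theorem predMass_le (s : Set ((ℝ × ℝ) × (ℝ × ℝ))) : predMass γ s ≤ γ.map fun x => x.2.1 :=
  Measure.map_mono Measure.restrict_le_self (by fun_prop)

theorem labelMarginal_map_snd (ν : Measure ((ℝ × ℝ) × (ℝ × ℝ))) (b : ℝ) :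
    labelMarginal (ν.map Prod.snd) b = predMass ν (targetLabel b) := by
  rw [labelMarginal, Measure.restrict_map measurable_snd (measurableSet_label b),
    Measure.map_map measurable_fst measurable_snd]
  rfl

theorem predMass_withDensity_keep {b : ℝ} (hb : b = 0 ∨ b = 1) :
    predMass (γ.withDensity (keep γ)) (targetLabel b) =
      (predMass γ (matched ∩ targetLabel b)).withDensity (keptFraction γ b) := by
  have hkeep : (γ.restrict (targetLabel b)).withDensity (keep γ) =
      (γ.restrict (targetLabel b)).withDensity
        (matched.indicator ((keptFraction γ b) ∘ fun x => x.2.1)) :=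
    withDensity_congr_ae <| (ae_restrict_mem (measurableSet_targetLabel b)).mono
      fun x hx => keep_eq_indicator hb hx
  rw [predMass, restrict_withDensity (measurableSet_targetLabel b), hkeep,
    withDensity_indicator measurableSet_matched, Measure.restrict_restrict measurableSet_matched,
    Measure.map_withDensity_comp _ (by fun_prop) (measurable_keptFraction b)]
  rfl

variable [IsFiniteMeasure γ]

instance (s : Set ((ℝ × ℝ) × (ℝ × ℝ))) : IsFiniteMeasure (predMass γ s) := by
  unfold predMass; infer_instance

theorem withDensity_predDensity (s : Set ((ℝ × ℝ) × (ℝ × ℝ))) :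
    (γ.map fun x => x.2.1).withDensity (predDensity γ s) = predMass γ s :=
  Measure.withDensity_rnDeriv_eq _ _ (Measure.absolutelyContinuous_of_le (predMass_le s))

theorem lintegral_predDensity (s : Set ((ℝ × ℝ) × (ℝ × ℝ))) :
    ∫⁻ v, predDensity γ s v ∂γ.map (fun x => x.2.1) = γ s := by
  rw [← setLIntegral_univ, ← withDensity_apply _ .univ, withDensity_predDensity, predMass,
    Measure.map_apply (by fun_prop) .univ, preimage_univ, Measure.restrict_apply_univ]

theorem predDensity_union {s t : Set ((ℝ × ℝ) × (ℝ × ℝ))} (hst : Disjoint s t)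
    (ht : MeasurableSet t) :
    predDensity γ (s ∪ t) =ᵐ[γ.map fun x => x.2.1] predDensity γ s + predDensity γ t := by
  unfold predDensity
  rw [predMass, Measure.restrict_union hst ht, Measure.map_add _ _ (by fun_prop)]
  exact Measure.rnDeriv_add _ _ _

theorem predDensity_targetLabel_eq (b : ℝ) :
    predDensity γ (targetLabel b) =ᵐ[γ.map fun x => x.2.1]
      predDensity γ (matched ∩ targetLabel b) + predDensity γ (matchedᶜ ∩ targetLabel b) := by
  have h := predDensity_union (γ := γ) (s := matched ∩ targetLabel b)
    (disjoint_compl_right.mono inter_subset_left inter_subset_left)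
    (measurableSet_matched.compl.inter (measurableSet_targetLabel b))
  rwa [← union_inter_distrib_right, union_compl_self, univ_inter] at h

theorem labelMoment_map_snd (b : ℝ) :
    labelMoment (γ.map Prod.snd) b = (γ.map fun x => x.2.1).withDensity
      fun v => predDensity γ (targetLabel b) v * ENNReal.ofReal |v - b| := by
  rw [labelMoment, labelMarginal_map_snd, ← withDensity_predDensity,
    ← withDensity_mul _ (measurable_predDensity _) (by fun_prop)]
  rfl

theorem labelMoment_map_snd_withDensity_keep {b : ℝ} (hb : b = 0 ∨ b = 1) :
    labelMoment ((γ.withDensity (keep γ)).map Prod.snd) b =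
      (γ.map fun x => x.2.1).withDensity
        fun v => min (matchedMoment γ 0 v) (matchedMoment γ 1 v) := by
  rw [labelMoment, labelMarginal_map_snd, predMass_withDensity_keep hb,
    ← withDensity_predDensity, ← withDensity_mul _ (measurable_predDensity _)
      (measurable_keptFraction b), ← withDensity_mul _
      ((measurable_predDensity _).mul (measurable_keptFraction b)) (by fun_prop)]
  refine withDensity_congr_ae ?_
  filter_upwards [Measure.rnDeriv_lt_top (predMass γ (matched ∩ targetLabel b))
    (γ.map fun x => x.2.1)] with v hv
  have hu : matchedMoment γ b v ≠ ⊤ := ENNReal.mul_ne_top ENNReal.ofReal_ne_top hv.ne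
  calc predDensity γ (matched ∩ targetLabel b) v * keptFraction γ b v * ENNReal.ofReal |v - b|
      = keptFraction γ b v * matchedMoment γ b v := by rw [matchedMoment]; ring
    _ = min (matchedMoment γ (1 - b) v) (matchedMoment γ b v) :=
      ENNReal.min_one_div_mul _ hu
    _ = _ := by rcases hb with rfl | rfl <;> norm_num [min_comm]

end Densities

section Excess

variable {γ : Measure ((ℝ × ℝ) × (ℝ × ℝ))} [IsFiniteMeasure γ]

theorem ae_balance_of_labelMoment_eq
    (hcal : labelMoment (γ.map Prod.snd) 1 = labelMoment (γ.map Prod.snd) 0)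
    {b : ℝ} (hb : b = 0 ∨ b = 1) :
    ∀ᵐ v ∂γ.map (fun x => x.2.1), predDensity γ (targetLabel b) v * ENNReal.ofReal |v - b| =
      predDensity γ (targetLabel (1 - b)) v * ENNReal.ofReal |v - (1 - b)| := by
  rw [labelMoment_map_snd, labelMoment_map_snd] at hcal
  replace hcal := (withDensity_eq_iff_of_sigmaFinite
    ((measurable_predDensity _).mul (by fun_prop)).aemeasurable
    ((measurable_predDensity _).mul (by fun_prop)).aemeasurable).1 hcal
  filter_upwards [hcal] with v hv
  rcases hb with rfl | rfl
  · simpa using hv.symm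
  · simpa using hv

theorem one_sub_keptFraction_mul_le
    (hcal : labelMoment (γ.map Prod.snd) 1 = labelMoment (γ.map Prod.snd) 0)
    {b : ℝ} (hb : b = 0 ∨ b = 1) (hρ : ∀ᵐ v ∂γ.map (fun x => x.2.1), v ∈ Icc (0 : ℝ) 1) :
    ∀ᵐ v ∂γ.map (fun x => x.2.1), (1 - keptFraction γ b v) * matchedMoment γ b v ≤
      predDensity γ (matchedᶜ ∩ targetLabel (1 - b)) v := by
  have hb' : 1 - b ∈ Icc (0 : ℝ) 1 := by rcases hb with rfl | rfl <;> norm_num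
  filter_upwards [ae_balance_of_labelMoment_eq hcal hb, predDensity_targetLabel_eq b,
    predDensity_targetLabel_eq (1 - b), hρ, Measure.rnDeriv_lt_top
      (predMass γ (matched ∩ targetLabel b)) (γ.map fun x => x.2.1)]
    with v hbal hsplit hsplit' hv hfin
  have hu : matchedMoment γ b v ≠ ⊤ := ENNReal.mul_ne_top ENNReal.ofReal_ne_top hfin.ne
  have hk : ENNReal.ofReal |v - (1 - b)| ≤ 1 :=
    ENNReal.ofReal_le_one.2 (abs_sub_le_of_nonneg_of_le hv.1 hv.2 hb'.1 hb'.2)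
  rw [keptFraction, ENNReal.one_sub_min_one_div_mul _ hu, tsub_le_iff_left]
  calc matchedMoment γ b v ≤ predDensity γ (targetLabel b) v * ENNReal.ofReal |v - b| := by
        rw [matchedMoment, hsplit, Pi.add_apply, mul_comm]; gcongr; exact le_self_add
    _ = predDensity γ (targetLabel (1 - b)) v * ENNReal.ofReal |v - (1 - b)| := hbal
    _ = matchedMoment γ (1 - b) v +
          predDensity γ (matchedᶜ ∩ targetLabel (1 - b)) v * ENNReal.ofReal |v - (1 - b)| := by
        rw [hsplit', Pi.add_apply, add_mul, matchedMoment, mul_comm (ENNReal.ofReal _)]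
    _ ≤ _ := by gcongr; exact mul_le_of_le_one_right' hk

theorem setLIntegral_one_sub_keep_le
    (hcal : labelMoment (γ.map Prod.snd) 1 = labelMoment (γ.map Prod.snd) 0)
    {b : ℝ} (hb : b = 0 ∨ b = 1) (hρ : ∀ᵐ v ∂γ.map (fun x => x.2.1), v ∈ Icc (0 : ℝ) 1) :
    ∫⁻ x in matched ∩ targetLabel b, (1 - keep γ x) * ENNReal.ofReal |x.2.1 - x.2.2| ∂γ ≤
      γ (matchedᶜ ∩ targetLabel (1 - b)) := by
  have hg : Measurable fun v => (1 - keptFraction γ b v) * ENNReal.ofReal |v - b| :=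
    (measurable_const.sub (measurable_keptFraction b)).mul (by fun_prop)
  calc ∫⁻ x in matched ∩ targetLabel b, (1 - keep γ x) * ENNReal.ofReal |x.2.1 - x.2.2| ∂γ
      = ∫⁻ x in matched ∩ targetLabel b,
          (1 - keptFraction γ b x.2.1) * ENNReal.ofReal |x.2.1 - b| ∂γ :=
        setLIntegral_congr_fun (measurableSet_matched.inter (measurableSet_targetLabel b))
          fun x hx => by rw [keep_eq_indicator hb hx.2, indicator_of_mem hx.1, hx.2]
    _ = ∫⁻ v, (1 - keptFraction γ b v) * ENNReal.ofReal |v - b|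
          ∂predMass γ (matched ∩ targetLabel b) := by
        rw [predMass, lintegral_map hg (by fun_prop)]
    _ = ∫⁻ v, predDensity γ (matched ∩ targetLabel b) v *
          ((1 - keptFraction γ b v) * ENNReal.ofReal |v - b|) ∂γ.map (fun x => x.2.1) := by
        rw [← withDensity_predDensity]
        exact lintegral_withDensity_eq_lintegral_mul _ (measurable_predDensity _) hg
    _ ≤ ∫⁻ v, predDensity γ (matchedᶜ ∩ targetLabel (1 - b)) v ∂γ.map (fun x => x.2.1) :=
        lintegral_mono_ae <| (one_sub_keptFraction_mul_le hcal hb hρ).mono fun v hv =>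
          le_of_eq_of_le (by rw [matchedMoment]; ring) hv
    _ = γ (matchedᶜ ∩ targetLabel (1 - b)) := lintegral_predDensity _

theorem setLIntegral_matched_one_sub_keep_le
    (hcal : labelMoment (γ.map Prod.snd) 1 = labelMoment (γ.map Prod.snd) 0)
    (h₂ : ∀ᵐ x ∂γ, x.2.1 ∈ Icc (0 : ℝ) 1 ∧ (x.2.2 = 0 ∨ x.2.2 = 1)) :
    ∫⁻ x in matched, (1 - keep γ x) * ENNReal.ofReal |x.2.1 - x.2.2| ∂γ ≤ γ matchedᶜ := by
  have hρ : ∀ᵐ v ∂γ.map (fun x => x.2.1), v ∈ Icc (0 : ℝ) 1 :=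
    (ae_map_iff (by fun_prop) measurableSet_Icc).2 (h₂.mono fun _ hx => hx.1)
  have hcover : (matched : Set ((ℝ × ℝ) × (ℝ × ℝ))) ≤ᵐ[γ]
      (matched ∩ targetLabel 0 ∪ matched ∩ targetLabel 1 : Set ((ℝ × ℝ) × (ℝ × ℝ))) :=
    h₂.mono fun x hx hm => hx.2.imp (⟨hm, ·⟩) (⟨hm, ·⟩)
  have hdisj : Disjoint (matchedᶜ ∩ targetLabel 1) (matchedᶜ ∩ targetLabel 0) :=
    Disjoint.mono inter_subset_right inter_subset_right
      (disjoint_left.2 fun x h1 h0 => one_ne_zero (h1.symm.trans h0))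
  calc ∫⁻ x in matched, (1 - keep γ x) * ENNReal.ofReal |x.2.1 - x.2.2| ∂γ
      ≤ ∫⁻ x in matched ∩ targetLabel 0 ∪ matched ∩ targetLabel 1,
          (1 - keep γ x) * ENNReal.ofReal |x.2.1 - x.2.2| ∂γ := lintegral_mono_set' hcover
    _ ≤ γ (matchedᶜ ∩ targetLabel 1) + γ (matchedᶜ ∩ targetLabel 0) := by
        refine (lintegral_union_le _ _ _).trans (add_le_add ?_ ?_)
        · simpa only [sub_zero] using setLIntegral_one_sub_keep_le hcal (.inl rfl) hρ
        · simpa only [sub_self] using setLIntegral_one_sub_keep_le hcal (.inr rfl) hρ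
    _ = γ (matchedᶜ ∩ targetLabel 1 ∪ matchedᶜ ∩ targetLabel 0) :=
        (measure_union hdisj
          (measurableSet_matched.compl.inter (measurableSet_targetLabel 0))).symm
    _ ≤ γ matchedᶜ := measure_mono (union_subset inter_subset_left inter_subset_left)

theorem lintegral_costInf_repair_keep_le
    (h₁ : ∀ᵐ x ∂γ, x.1.1 ∈ Icc (0 : ℝ) 1 ∧ (x.1.2 = 0 ∨ x.1.2 = 1))
    (h₂ : ∀ᵐ x ∂γ, x.2.1 ∈ Icc (0 : ℝ) 1 ∧ (x.2.2 = 0 ∨ x.2.2 = 1))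
    (hcal : labelMoment (γ.map Prod.snd) 1 = labelMoment (γ.map Prod.snd) 0) :
    ∫⁻ x, costInf x.1 x.2 ∂repair γ (keep γ) ≤ 2 * ∫⁻ x, costL1 x.1 x.2 ∂γ := by
  calc ∫⁻ x, costInf x.1 x.2 ∂repair γ (keep γ)
      ≤ ∫⁻ x, costL1 x.1 x.2 ∂γ +
          ∫⁻ x in matched, (1 - keep γ x) * ENNReal.ofReal |x.2.1 - x.2.2| ∂γ :=
        lintegral_costInf_repair_le measurable_keep keep_le_one
          (fun _ hx => indicator_of_notMem hx _) h₁ h₂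
    _ ≤ ∫⁻ x, costL1 x.1 x.2 ∂γ + γ matchedᶜ := by
        gcongr; exact setLIntegral_matched_one_sub_keep_le hcal h₂
    _ ≤ ∫⁻ x, costL1 x.1 x.2 ∂γ + ∫⁻ x, costL1 x.1 x.2 ∂γ := by
        gcongr
        exact measure_compl_matched_le_lintegral_costL1 (h₁.mono fun _ hx => hx.2)
          (h₂.mono fun _ hx => hx.2)
    _ = 2 * ∫⁻ x, costL1 x.1 x.2 ∂γ := (two_mul _).symm

end Excess

theorem perfectlyCalibrated_map_snd_repair_keep {γ : Measure ((ℝ × ℝ) × (ℝ × ℝ))}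
    [IsProbabilityMeasure γ]
    (h₁ : ∀ᵐ x ∂γ, x.1.1 ∈ Icc (0 : ℝ) 1 ∧ (x.1.2 = 0 ∨ x.1.2 = 1))
    (h₂ : ∀ᵐ x ∂γ, x.2.1 ∈ Icc (0 : ℝ) 1 ∧ (x.2.2 = 0 ∨ x.2.2 = 1)) :
    PerfectlyCalibrated ((repair γ (keep γ)).map Prod.snd) := by
  have : IsProbabilityMeasure ((repair γ (keep γ)).map Prod.fst) := by
    rw [map_fst_repair measurable_keep keep_le_one]
    exact Measure.isProbabilityMeasure_map measurable_fst.aemeasurable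
  have := Measure.isProbabilityMeasure_of_map (μ := repair γ (keep γ)) Prod.fst
  have hdiag : ∀ᵐ p ∂(γ.withDensity (1 - keep γ)).map (fun x => (x.1.2, x.1.2)), p.1 = p.2 :=
    (ae_map_iff (by fun_prop) (measurableSet_eq_fun measurable_fst measurable_snd)).2
      (ae_of_all _ fun _ => rfl)
  have hsupp : SupportedOn ((repair γ (keep γ)).map Prod.snd) := by
    rw [map_snd_repair, SupportedOn, ae_add_measure_iff]
    refine ⟨(supportedOn_map_iff measurable_snd).2
      ((withDensity_absolutelyContinuous _ _).ae_le h₂), (supportedOn_map_iff (by fun_prop)).2 ?_⟩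
    filter_upwards [(withDensity_absolutelyContinuous _ _).ae_le h₁] with x hx
    exact ⟨by rcases hx.2 with h | h <;> rw [h] <;> norm_num, hx.2⟩
  refine ⟨Measure.isProbabilityMeasure_map measurable_snd.aemeasurable, hsupp,
    (calibrated_iff_labelMoment_eq hsupp).2 ?_⟩
  rw [map_snd_repair, labelMoment_add, labelMoment_add,
    labelMoment_map_snd_withDensity_keep (.inr rfl),
    labelMoment_map_snd_withDensity_keep (.inl rfl),
    labelMoment_eq_zero_of_ae_fst_eq_snd hdiag, labelMoment_eq_zero_of_ae_fst_eq_snd hdiag]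

theorem dCE_le_two_mul_lintegral_costL1 {D : Measure (ℝ × ℝ)} [IsProbabilityMeasure D]
    (hD : SupportedOn D) {D' : Measure (ℝ × ℝ)} (hD' : PerfectlyCalibrated D')
    {γ : Measure ((ℝ × ℝ) × (ℝ × ℝ))} (hfst : γ.map Prod.fst = D)
    (hsnd : γ.map Prod.snd = D') :
    dCE D ≤ 2 * ∫⁻ x, costL1 x.1 x.2 ∂γ := by
  obtain ⟨_, hD'supp, hD'cal⟩ := hD'
  subst hfst hsnd
  have := Measure.isProbabilityMeasure_of_map (μ := γ) Prod.fst
  have h₁ := (supportedOn_map_iff measurable_fst).1 hD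
  have h₂ := (supportedOn_map_iff measurable_snd).1 hD'supp
  calc _ ≤ ∫⁻ x, costInf x.1 x.2 ∂repair γ (keep γ) :=
        (iInf₂_le _ (perfectlyCalibrated_map_snd_repair_keep h₁ h₂)).trans
          (iInf₂_le _ ⟨map_fst_repair measurable_keep keep_le_one, rfl⟩)
    _ ≤ 2 * ∫⁻ x, costL1 x.1 x.2 ∂γ :=
        lintegral_costInf_repair_keep_le h₁ h₂ ((calibrated_iff_labelMoment_eq hD'supp).1 hD'cal)

theorem half_mul_dCE_le_dCEl1 {D : Measure (ℝ × ℝ)} [IsProbabilityMeasure D]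
    (hD : SupportedOn D) : ENNReal.ofReal (1 / 2) * dCE D ≤ dCEl1 D := by
  refine le_dCECost fun D' hD' γ hfst hsnd => ?_
  calc ENNReal.ofReal (1 / 2) * dCE D
      ≤ ENNReal.ofReal (1 / 2) * (2 * ∫⁻ x, costL1 x.1 x.2 ∂γ) := by
        gcongr; exact dCE_le_two_mul_lintegral_costL1 hD hD' hfst hsnd
    _ = ∫⁻ x, costL1 x.1 x.2 ∂γ := by
        rw [← mul_assoc, one_div, ENNReal.ofReal_inv_of_pos two_pos, ENNReal.ofReal_ofNat,
          ENNReal.inv_mul_cancel two_ne_zero ENNReal.ofNat_ne_top, one_mul]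

end DistanceToCalibration

/-- `dCE_{ℓ₁}(D) ≤ dCE(D)` for every `D`, and there is a universal
constant `c > 0` with `c·dCE(D) ≤ dCE_{ℓ₁}(D)` for every `D`. -/
theorem dCEl1_equiv_dCE :
    (∀ (D : Measure (ℝ × ℝ)) [IsProbabilityMeasure D], SupportedOn D → dCEl1 D ≤ dCE D) ∧
    ∃ c : ℝ, 0 < c ∧
      ∀ (D : Measure (ℝ × ℝ)) [IsProbabilityMeasure D], SupportedOn D →
        ENNReal.ofReal c * dCE D ≤ dCEl1 D :=
  ⟨fun D _ _ => DistanceToCalibration.dCECost_mono DistanceToCalibration.costL1_le_costInf D,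
    1 / 2, by norm_num, fun _ _ hD => DistanceToCalibration.half_mul_dCE_le_dCEl1 hD⟩
end
end

section
/- Let d: [0,1]² → ℝ≥0 ∪ {∞} be any metric such that for some c > 0 and all ε > 0 and all u, v ∈ [ε, 1−ε], d(u,v) ≤ |u−v|·ε^{−c}. Then there is a constant C (depending only on c) such that for every probability distribution D over [0,1]×{0,1}, wCE_d(D)^q ≤ C·wCE(D), where q := max(c+1, 2). -/
/-!
Clamping a `d`-weight `w` to `[ε, 1 - ε]` and scaling it by `ε ^ c` gives a `1`-Lipschitz weight,
so the clamped part of `E[(f - y) w(f)]` is at most `ε ^ (-c) · wCE`. The remainder lives on the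
tails `f ≤ ε` and `f ≥ 1 - ε`, whose `|f - y|`-mass is at most `(wCE + 2ε²) / ε`, as the
`1`-Lipschitz weights `min u (2ε) - 2ε` and `max u (1 - 2ε) - (1 - 2ε)` witness. Hence
`wCE_d ≤ ε ^ (-c) K + 4 (K + 2ε²) / ε` with `K = wCE ≤ 1`, and `ε = K ^ (1/q) / 2` gives
`wCE_d ≤ (2 ^ c + 12) K ^ (1/q)`.
-/

open MeasureTheory Real Set
open scoped ENNReal

noncomputable section

/-- The weak calibration error w.r.t. an extended-real-valued metric `d` on `[0,1]`:
`wCE_d(D) = sup_w E[(f - y) w(f)]` over `d`-`1`-Lipschitz `w : [0,1] → [-1,1]`. -/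
def wCEdE (d : ℝ → ℝ → ℝ≥0∞) (D : Measure (ℝ × ℝ)) : ℝ :=
  ⨆ w : {w : ℝ → ℝ // (∀ u ∈ Icc (0 : ℝ) 1, w u ∈ Icc (-1 : ℝ) 1) ∧
      ∀ u ∈ Icc (0 : ℝ) 1, ∀ v ∈ Icc (0 : ℝ) 1, ENNReal.ofReal |w u - w v| ≤ d u v},
    ∫ p, (p.1 - p.2) * w.1 p.1 ∂D

/-- The weak calibration error for the standard metric `|u - v|` on `[0,1]`. -/
def wCE (D : Measure (ℝ × ℝ)) : ℝ :=
  wCEdE (fun u v => ENNReal.ofReal |u - v|) D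

/-- The weight functions over which `wCEdE d` takes its supremum. -/
abbrev IsWeightFn (d : ℝ → ℝ → ℝ≥0∞) (w : ℝ → ℝ) : Prop :=
  (∀ u ∈ Icc (0 : ℝ) 1, w u ∈ Icc (-1 : ℝ) 1) ∧
    ∀ u ∈ Icc (0 : ℝ) 1, ∀ v ∈ Icc (0 : ℝ) 1, ENNReal.ofReal |w u - w v| ≤ d u v

namespace SupportedOn

variable {D : Measure (ℝ × ℝ)}

theorem ae_abs_sub_le_one (hD : SupportedOn D) : ∀ᵐ p ∂D, |p.1 - p.2| ≤ 1 := by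
  filter_upwards [hD] with p ⟨⟨h0, h1⟩, hy⟩
  rcases hy with hy | hy <;> rw [hy, abs_le] <;> constructor <;> linarith

theorem ae_abs_sub_mul_le_one (hD : SupportedOn D) {w : ℝ → ℝ}
    (hw : ∀ u ∈ Icc (0 : ℝ) 1, |w u| ≤ 1) : ∀ᵐ p ∂D, |(p.1 - p.2) * w p.1| ≤ 1 := by
  filter_upwards [hD, hD.ae_abs_sub_le_one] with p hp hp1
  rw [abs_mul]
  exact mul_le_one₀ hp1 (abs_nonneg _) (hw _ hp.1)

theorem integrable_abs_sub [IsFiniteMeasure D] (hD : SupportedOn D) :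
    Integrable (fun p : ℝ × ℝ => |p.1 - p.2|) D :=
  Integrable.of_bound (by fun_prop) 1 (by simpa using hD.ae_abs_sub_le_one)

theorem integrable_sub_mul [IsFiniteMeasure D] (hD : SupportedOn D) {w : ℝ → ℝ}
    (hw : Measurable w) (hw1 : ∀ u ∈ Icc (0 : ℝ) 1, |w u| ≤ 1) :
    Integrable (fun p : ℝ × ℝ => (p.1 - p.2) * w p.1) D :=
  Integrable.of_bound (by fun_prop) 1 (hD.ae_abs_sub_mul_le_one hw1)

theorem integral_sub_mul_le_one [IsProbabilityMeasure D] (hD : SupportedOn D) {w : ℝ → ℝ}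
    (hw : ∀ u ∈ Icc (0 : ℝ) 1, |w u| ≤ 1) :
    ∫ p, (p.1 - p.2) * w p.1 ∂D ≤ 1 := by
  by_cases hint : Integrable (fun p : ℝ × ℝ => (p.1 - p.2) * w p.1) D
  · calc ∫ p, (p.1 - p.2) * w p.1 ∂D ≤ ∫ _, (1 : ℝ) ∂D :=
          integral_mono_ae hint (integrable_const 1) <|
            (hD.ae_abs_sub_mul_le_one hw).mono fun _ hp => (le_abs_self _).trans hp
      _ = 1 := by simp
  · simp [integral_undef hint]

end SupportedOn

section WeakCalibrationError

variable {D : Measure (ℝ × ℝ)} [IsProbabilityMeasure D] {d : ℝ → ℝ → ℝ≥0∞}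

theorem IsWeightFn.abs_le_one {w : ℝ → ℝ} (hw : IsWeightFn d w) :
    ∀ u ∈ Icc (0 : ℝ) 1, |w u| ≤ 1 :=
  fun u hu => abs_le.2 (hw.1 u hu)

theorem integral_sub_mul_le_wCEdE (hD : SupportedOn D) {w : ℝ → ℝ} (hw : IsWeightFn d w) :
    ∫ p, (p.1 - p.2) * w p.1 ∂D ≤ wCEdE d D :=
  le_ciSup (f := fun w : {w // IsWeightFn d w} => ∫ p, (p.1 - p.2) * w.1 p.1 ∂D)
    ⟨1, by rintro _ ⟨w, rfl⟩; exact hD.integral_sub_mul_le_one w.2.abs_le_one⟩ ⟨w, hw⟩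

theorem wCEdE_nonneg (hD : SupportedOn D) : 0 ≤ wCEdE d D := by
  simpa using integral_sub_mul_le_wCEdE (d := d) hD (w := fun _ => 0) ⟨by simp, by simp⟩

omit [IsProbabilityMeasure D] in
theorem wCEdE_le {B : ℝ} (h : ∀ w, IsWeightFn d w → ∫ p, (p.1 - p.2) * w p.1 ∂D ≤ B) :
    wCEdE d D ≤ B :=
  have : Nonempty {w // IsWeightFn d w} := ⟨⟨fun _ => 0, by simp, by simp⟩⟩
  ciSup_le fun w => h w.1 w.2

theorem wCE_le_one (hD : SupportedOn D) : wCE D ≤ 1 :=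
  wCEdE_le fun _ hw => hD.integral_sub_mul_le_one hw.abs_le_one

theorem isWeightFn_of_lipschitzWith {t : ℝ → ℝ} (ht : LipschitzWith 1 t)
    (ht1 : ∀ u ∈ Icc (0 : ℝ) 1, |t u| ≤ 1) : IsWeightFn (fun u v => ENNReal.ofReal |u - v|) t :=
  ⟨fun u hu => abs_le.1 (ht1 u hu), fun u _ v _ =>
    ENNReal.ofReal_le_ofReal (by simpa [Real.dist_eq] using ht.dist_le_mul u v)⟩

end WeakCalibrationError

section Tails

variable {D : Measure (ℝ × ℝ)} [IsProbabilityMeasure D]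

theorem integral_le_wCE_add (hD : SupportedOn D) {t : ℝ → ℝ} (ht : LipschitzWith 1 t)
    (ht1 : ∀ u ∈ Icc (0 : ℝ) 1, |t u| ≤ 1) {g : ℝ × ℝ → ℝ} (hg : Integrable g D) {b : ℝ}
    (h : ∀ᵐ p ∂D, g p ≤ (p.1 - p.2) * t p.1 + b) : ∫ p, g p ∂D ≤ wCE D + b := by
  have ht_int := hD.integrable_sub_mul ht.continuous.measurable ht1
  calc ∫ p, g p ∂D ≤ ∫ p, ((p.1 - p.2) * t p.1 + b) ∂D :=
        integral_mono_ae hg (ht_int.add (integrable_const b)) h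
    _ = ∫ p, (p.1 - p.2) * t p.1 ∂D + b := by
        rw [integral_add ht_int (integrable_const b)]; simp
    _ ≤ wCE D + b := by
        gcongr; exact integral_sub_mul_le_wCEdE hD (isWeightFn_of_lipschitzWith ht ht1)

theorem setIntegral_abs_sub_le_of_lipschitzWith (hD : SupportedOn D) {S : Set ℝ}
    (hS : MeasurableSet S) {ε b : ℝ} (hε : 0 < ε) {t : ℝ → ℝ} (ht : LipschitzWith 1 t)
    (ht1 : ∀ u ∈ Icc (0 : ℝ) 1, |t u| ≤ 1)
    (h_in : ∀ f ∈ Icc (0 : ℝ) 1, ∀ y : ℝ, (y = 0 ∨ y = 1) → f ∈ S →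
      ε * |f - y| ≤ (f - y) * t f + b)
    (h_out : ∀ f ∈ Icc (0 : ℝ) 1, ∀ y : ℝ, (y = 0 ∨ y = 1) → f ∉ S → 0 ≤ (f - y) * t f + b) :
    ∫ p in Prod.fst ⁻¹' S, |p.1 - p.2| ∂D ≤ (wCE D + b) / ε := by
  have hS' : MeasurableSet (Prod.fst ⁻¹' S : Set (ℝ × ℝ)) := measurable_fst hS
  rw [le_div_iff₀' hε, ← integral_const_mul, ← integral_indicator hS']
  refine integral_le_wCE_add hD ht ht1 ((hD.integrable_abs_sub.const_mul ε).indicator hS') ?_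
  filter_upwards [hD] with p ⟨hf, hy⟩
  by_cases hpS : p.1 ∈ S
  · simpa [indicator_of_mem (show p ∈ Prod.fst ⁻¹' S from hpS)] using h_in p.1 hf p.2 hy hpS
  · simpa [indicator_of_notMem (show p ∉ Prod.fst ⁻¹' S from hpS)] using h_out p.1 hf p.2 hy hpS

theorem setIntegral_abs_sub_Iic_le (hD : SupportedOn D) {ε : ℝ} (hε : 0 < ε) (hε2 : ε ≤ 1 / 2) :
    ∫ p in Prod.fst ⁻¹' Iic ε, |p.1 - p.2| ∂D ≤ (wCE D + 2 * ε ^ 2) / ε := by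
  refine setIntegral_abs_sub_le_of_lipschitzWith hD measurableSet_Iic hε
    (t := fun u => min u (2 * ε) - 2 * ε)
    (by simpa using (LipschitzWith.id.min_const (2 * ε)).sub (LipschitzWith.const (2 * ε)))
    (fun u ⟨hu0, hu1⟩ => ?_) (fun f ⟨hf0, hf1⟩ y hy hfS => ?_) (fun f ⟨hf0, hf1⟩ y hy hfS => ?_)
  · rw [abs_le]; constructor <;> cases min_cases u (2 * ε) <;> linarith
  · rw [mem_Iic] at hfS
    rcases hy with rfl | rfl
    · rw [sub_zero, abs_of_nonneg hf0, min_eq_left (by linarith)]; nlinarith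
    · rw [abs_of_nonpos (by linarith), min_eq_left (by linarith)]; nlinarith
  · rw [mem_Iic, not_le] at hfS
    rcases hy with rfl | rfl <;> rcases min_cases f (2 * ε) with ⟨h, _⟩ | ⟨h, _⟩ <;> rw [h] <;>
      nlinarith

theorem setIntegral_abs_sub_Ici_le (hD : SupportedOn D) {ε : ℝ} (hε : 0 < ε) (hε2 : ε ≤ 1 / 2) :
    ∫ p in Prod.fst ⁻¹' Ici (1 - ε), |p.1 - p.2| ∂D ≤ (wCE D + 2 * ε ^ 2) / ε := by
  refine setIntegral_abs_sub_le_of_lipschitzWith hD measurableSet_Ici hε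
    (t := fun u => max u (1 - 2 * ε) - (1 - 2 * ε))
    (by simpa using (LipschitzWith.id.max_const (1 - 2 * ε)).sub (LipschitzWith.const (1 - 2 * ε)))
    (fun u ⟨hu0, hu1⟩ => ?_) (fun f ⟨hf0, hf1⟩ y hy hfS => ?_) (fun f ⟨hf0, hf1⟩ y hy hfS => ?_)
  · rw [abs_le]; constructor <;> cases max_cases u (1 - 2 * ε) <;> linarith
  · rw [mem_Ici] at hfS
    rcases hy with rfl | rfl
    · rw [sub_zero, abs_of_nonneg hf0, max_eq_left (by linarith)]; nlinarith
    · rw [abs_of_nonpos (by linarith), max_eq_left (by linarith)]; nlinarith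
  · rw [mem_Ici, not_le] at hfS
    rcases hy with rfl | rfl <;> rcases max_cases f (1 - 2 * ε) with ⟨h, _⟩ | ⟨h, _⟩ <;> rw [h] <;>
      nlinarith

end Tails

theorem lipschitzWith_inv_mul_comp_projIcc {L a b : ℝ} (hL : 0 < L) (hab : a ≤ b) {w : ℝ → ℝ}
    (hw : ∀ x ∈ Icc a b, ∀ y ∈ Icc a b, |w x - w y| ≤ L * |x - y|) :
    LipschitzWith 1 (fun u => L⁻¹ * w (projIcc a b hab u)) := by
  refine LipschitzWith.of_dist_le_mul fun x y => ?_
  rw [Real.dist_eq, Real.dist_eq, ← mul_sub, abs_mul, abs_inv, abs_of_pos hL, NNReal.coe_one,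
    one_mul, inv_mul_le_iff₀ hL]
  exact (hw _ (projIcc a b hab x).2 _ (projIcc a b hab y).2).trans
    (mul_le_mul_of_nonneg_left (abs_projIcc_sub_projIcc hab) hL.le)

theorem IsWeightFn.abs_sub_le {d : ℝ → ℝ → ℝ≥0∞} {w : ℝ → ℝ} (hw : IsWeightFn d w)
    {a b L : ℝ} (ha : 0 ≤ a) (hb : b ≤ 1) (hL : 0 ≤ L)
    (hd : ∀ u ∈ Icc a b, ∀ v ∈ Icc a b, d u v ≤ ENNReal.ofReal (|u - v| * L)) :
    ∀ x ∈ Icc a b, ∀ y ∈ Icc a b, |w x - w y| ≤ L * |x - y| := by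
  intro x hx y hy
  have h := (hw.2 x (Icc_subset_Icc ha hb hx) y (Icc_subset_Icc ha hb hy)).trans (hd x hx y hy)
  rw [ENNReal.ofReal_le_ofReal_iff (by positivity), mul_comm] at h
  exact h

theorem sub_mul_sub_comp_projIcc_le {a b : ℝ} (hab : a ≤ b) (ha : 0 ≤ a) (hb : b ≤ 1)
    {w : ℝ → ℝ} (hw : ∀ u ∈ Icc (0 : ℝ) 1, |w u| ≤ 1) {p : ℝ × ℝ} (hp : p.1 ∈ Icc (0 : ℝ) 1) :
    (p.1 - p.2) * (w p.1 - w (projIcc a b hab p.1)) ≤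
      2 * ((Prod.fst ⁻¹' Iic a).indicator (fun p => |p.1 - p.2|) p +
        (Prod.fst ⁻¹' Ici b).indicator (fun p => |p.1 - p.2|) p) := by
  set cl := (projIcc a b hab p.1 : ℝ)
  have hcl : |w p.1 - w cl| ≤ 2 := by
    have := hw cl ⟨ha.trans (projIcc a b hab p.1).2.1, (projIcc a b hab p.1).2.2.trans hb⟩
    linarith [abs_sub (w p.1) (w cl), hw _ hp]
  have h_lhs : (p.1 - p.2) * (w p.1 - w cl) ≤ |p.1 - p.2| * |w p.1 - w cl| :=
    abs_mul (p.1 - p.2) _ ▸ le_abs_self _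
  have hT : ∀ S : Set (ℝ × ℝ), 0 ≤ S.indicator (fun p => |p.1 - p.2|) p :=
    fun S => indicator_nonneg (fun _ _ => abs_nonneg _) p
  by_cases h_low : p.1 ≤ a
  · rw [indicator_of_mem (s := Prod.fst ⁻¹' Iic a) h_low]
    nlinarith [abs_nonneg (p.1 - p.2), hT (Prod.fst ⁻¹' Ici b)]
  by_cases h_high : b ≤ p.1
  · rw [indicator_of_mem (s := Prod.fst ⁻¹' Ici b) h_high]
    nlinarith [abs_nonneg (p.1 - p.2), hT (Prod.fst ⁻¹' Iic a)]
  have hcl_eq : cl = p.1 := by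
    simp only [cl, projIcc_of_mem hab ⟨(not_le.1 h_low).le, (not_le.1 h_high).le⟩]
  rw [hcl_eq, sub_self, mul_zero]
  linarith [hT (Prod.fst ⁻¹' Iic a), hT (Prod.fst ⁻¹' Ici b)]

section KeyBound

variable {D : Measure (ℝ × ℝ)} [IsProbabilityMeasure D] {d : ℝ → ℝ → ℝ≥0∞}

theorem integral_sub_mul_sub_comp_projIcc_le (hD : SupportedOn D) {ε : ℝ} (hε : 0 < ε)
    (hε2 : ε ≤ 1 / 2) (hεε : ε ≤ 1 - ε) {w : ℝ → ℝ} (hw : ∀ u ∈ Icc (0 : ℝ) 1, |w u| ≤ 1)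
    (hint : Integrable (fun p : ℝ × ℝ => (p.1 - p.2) * (w p.1 - w (projIcc ε (1 - ε) hεε p.1))) D) :
    ∫ p, (p.1 - p.2) * (w p.1 - w (projIcc ε (1 - ε) hεε p.1)) ∂D ≤
      4 * ((wCE D + 2 * ε ^ 2) / ε) := by
  have hS₁ : MeasurableSet (Prod.fst ⁻¹' Iic ε : Set (ℝ × ℝ)) := measurable_fst measurableSet_Iic
  have hS₂ : MeasurableSet (Prod.fst ⁻¹' Ici (1 - ε) : Set (ℝ × ℝ)) :=
    measurable_fst measurableSet_Ici
  have hT₁ := hD.integrable_abs_sub.indicator hS₁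
  have hT₂ := hD.integrable_abs_sub.indicator hS₂
  calc _ ≤ ∫ p, 2 * ((Prod.fst ⁻¹' Iic ε).indicator (fun p => |p.1 - p.2|) p +
          (Prod.fst ⁻¹' Ici (1 - ε)).indicator (fun p => |p.1 - p.2|) p) ∂D :=
        integral_mono_ae hint ((hT₁.add hT₂).const_mul 2) <| hD.mono fun p hp =>
          sub_mul_sub_comp_projIcc_le hεε hε.le (by linarith) hw hp.1
    _ = 2 * (∫ p in Prod.fst ⁻¹' Iic ε, |p.1 - p.2| ∂D +
          ∫ p in Prod.fst ⁻¹' Ici (1 - ε), |p.1 - p.2| ∂D) := by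
        rw [integral_const_mul, integral_add hT₁ hT₂, integral_indicator hS₁,
          integral_indicator hS₂]
    _ ≤ 4 * ((wCE D + 2 * ε ^ 2) / ε) := by
        linarith [setIntegral_abs_sub_Iic_le hD hε hε2, setIntegral_abs_sub_Ici_le hD hε hε2]

theorem integral_sub_mul_le_of_isWeightFn (hD : SupportedOn D) {c ε : ℝ} (hc : 0 ≤ c)
    (hε : 0 < ε) (hε2 : ε ≤ 1 / 2)
    (hd : ∀ u ∈ Icc ε (1 - ε), ∀ v ∈ Icc ε (1 - ε), d u v ≤ ENNReal.ofReal (|u - v| * ε ^ (-c)))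
    {w : ℝ → ℝ} (hw : IsWeightFn d w) :
    ∫ p, (p.1 - p.2) * w p.1 ∂D ≤ ε ^ (-c) * wCE D + 4 * ((wCE D + 2 * ε ^ 2) / ε) := by
  set L := ε ^ (-c)
  have hL : 1 ≤ L := one_le_rpow_of_pos_of_le_one_of_nonpos hε (by linarith) (by linarith)
  by_cases hF : Integrable (fun p : ℝ × ℝ => (p.1 - p.2) * w p.1) D
  swap
  · rw [integral_undef hF]
    have : 0 ≤ wCE D := wCEdE_nonneg hD
    positivity
  have hεε : ε ≤ 1 - ε := by linarith
  set cl : ℝ → ℝ := fun u => projIcc ε (1 - ε) hεε u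
  set v : ℝ → ℝ := fun u => L⁻¹ * w (cl u)
  have hv : LipschitzWith 1 v := lipschitzWith_inv_mul_comp_projIcc (by linarith) hεε
    (hw.abs_sub_le hε.le (by linarith) (by linarith) hd)
  have hv1 : ∀ u ∈ Icc (0 : ℝ) 1, |v u| ≤ 1 := fun u _ => by
    rw [abs_mul, abs_inv, abs_of_pos (by linarith : 0 < L)]
    refine mul_le_one₀ (inv_le_one_of_one_le₀ hL) (abs_nonneg _) (hw.abs_le_one _ ?_)
    exact ⟨hε.le.trans (projIcc ε (1 - ε) hεε u).2.1,
      (projIcc ε (1 - ε) hεε u).2.2.trans (by linarith)⟩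
  have hG_eq : (fun p : ℝ × ℝ => (p.1 - p.2) * w (cl p.1)) =
      fun p => L * ((p.1 - p.2) * v p.1) := by
    ext p; simp only [v]; field_simp
  have hG_int : Integrable (fun p : ℝ × ℝ => (p.1 - p.2) * w (cl p.1)) D :=
    hG_eq ▸ (hD.integrable_sub_mul hv.continuous.measurable hv1).const_mul L
  have hG : ∫ p, (p.1 - p.2) * w (cl p.1) ∂D ≤ L * wCE D := by
    rw [hG_eq, integral_const_mul]
    gcongr
    exact integral_sub_mul_le_wCEdE hD (isWeightFn_of_lipschitzWith hv hv1)
  have hR_int : Integrable (fun p : ℝ × ℝ => (p.1 - p.2) * (w p.1 - w (cl p.1))) D := by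
    simp only [mul_sub]; exact hF.sub hG_int
  calc ∫ p, (p.1 - p.2) * w p.1 ∂D = ∫ p, (p.1 - p.2) * w (cl p.1) ∂D +
        ∫ p, (p.1 - p.2) * (w p.1 - w (cl p.1)) ∂D := by
        rw [← integral_add hG_int hR_int]; simp only [mul_sub, add_sub_cancel]
    _ ≤ L * wCE D + 4 * ((wCE D + 2 * ε ^ 2) / ε) :=
        add_le_add hG (integral_sub_mul_sub_comp_projIcc_le hD hε hε2 hεε hw.abs_le_one hR_int)

end KeyBound

theorem rpow_le_mul_of_forall_le {c q K L : ℝ} (hq : c + 1 ≤ q) (hq2 : 2 ≤ q) (hK0 : 0 ≤ K)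
    (hK1 : K ≤ 1) (hL : 0 ≤ L)
    (h : ∀ ε : ℝ, 0 < ε → ε ≤ 1 / 2 → L ≤ ε ^ (-c) * K + 4 * ((K + 2 * ε ^ 2) / ε)) :
    L ^ q ≤ (2 ^ c + 12) ^ q * K := by
  have hq0 : 0 < q := by linarith
  rcases hK0.eq_or_lt with rfl | hK
  · have hL0 : L = 0 := by
      by_contra hL0
      have hLpos : 0 < L := hL.lt_of_ne' hL0
      have hε : 0 < min (1 / 2) (L / 16) := by positivity
      have := h _ hε (min_le_left _ _)
      rw [mul_zero, zero_add, zero_add, mul_div_assoc, sq, mul_div_cancel_right₀ _ hε.ne'] at this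
      linarith [min_le_right (1 / 2 : ℝ) (L / 16)]
    simp [hL0, zero_rpow hq0.ne']
  -- choose `ε = K ^ (1 / q) / 2`, written through `s = K ^ (1 / q)`
  obtain ⟨s, hs0, hs1, rfl⟩ : ∃ s : ℝ, 0 < s ∧ s ≤ 1 ∧ s ^ q = K :=
    ⟨K ^ q⁻¹, by positivity, rpow_le_one hK0 hK1 (by positivity), rpow_inv_rpow hK0 hq0.ne'⟩
  have hsq : s ^ q ≤ s ^ 2 := by
    simpa using rpow_le_rpow_of_exponent_ge hs0 hs1 hq2
  have h_mid : (s / 2) ^ (-c) * s ^ q ≤ 2 ^ c * s := by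
    have : (s / 2) ^ (-c) * s ^ q = 2 ^ c * s ^ (q - c) := by
      rw [div_rpow hs0.le zero_le_two, rpow_neg hs0.le, rpow_neg zero_le_two, rpow_sub hs0]
      field_simp
    rw [this]
    gcongr
    simpa using rpow_le_rpow_of_exponent_ge hs0 hs1 (by linarith : 1 ≤ q - c)
  have h_tail : 4 * ((s ^ q + 2 * (s / 2) ^ 2) / (s / 2)) ≤ 12 * s := by
    rw [mul_div_assoc', div_le_iff₀ (by positivity)]
    nlinarith
  have hLs : L ≤ (2 ^ c + 12) * s := by
    linarith [h (s / 2) (by positivity) (by linarith)]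
  calc L ^ q ≤ ((2 ^ c + 12) * s) ^ q := rpow_le_rpow hL hLs hq0.le
    _ = (2 ^ c + 12) ^ q * s ^ q := mul_rpow (by positivity) hs0.le

/-- If the metric `d` on `[0,1]` (possibly taking value `∞`) satisfies
`d(u,v) ≤ |u-v|·ε^{-c}` for all `u,v ∈ [ε, 1-ε]`, then `wCE_d(D)^q ≤ C·wCE(D)` with
`q = max(c+1, 2)` and a constant `C` depending only on `c`. -/
theorem wCEd_pow_le_wCE (c : ℝ) (hc : 0 < c) :
    ∃ C : ℝ, 0 < C ∧
      ∀ d : ℝ → ℝ → ℝ≥0∞,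
        (∀ u ∈ Icc (0 : ℝ) 1, d u u = 0) →
        (∀ u ∈ Icc (0 : ℝ) 1, ∀ v ∈ Icc (0 : ℝ) 1, d u v = 0 → u = v) →
        (∀ u ∈ Icc (0 : ℝ) 1, ∀ v ∈ Icc (0 : ℝ) 1, d u v = d v u) →
        (∀ u ∈ Icc (0 : ℝ) 1, ∀ v ∈ Icc (0 : ℝ) 1, ∀ z ∈ Icc (0 : ℝ) 1,
          d u z ≤ d u v + d v z) →
        (∀ ε : ℝ, 0 < ε → ∀ u ∈ Icc ε (1 - ε), ∀ v ∈ Icc ε (1 - ε),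
          d u v ≤ ENNReal.ofReal (|u - v| * ε ^ (-c))) →
        ∀ (D : Measure (ℝ × ℝ)) [IsProbabilityMeasure D], SupportedOn D →
          wCEdE d D ^ max (c + 1) 2 ≤ C * wCE D := by
  refine ⟨(2 ^ c + 12) ^ max (c + 1) 2, by positivity, ?_⟩
  intro d _ _ _ _ hd D _ hD
  refine rpow_le_mul_of_forall_le (le_max_left _ _) (le_max_right _ _) (wCEdE_nonneg hD)
    (wCE_le_one hD) (wCEdE_nonneg hD) fun ε hε hε2 => wCEdE_le fun w hw => ?_
  exact integral_sub_mul_le_of_isWeightFn hD hc.le hε hε2 (hd ε hε) hw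
end
end
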